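/- arXiv:1309.6414 — 2 statements merged into one kernel-verified Lean document; each statement's English description precedes it below -/
import Mathlib

section
/- Let d ≥ 1 and α ∈ (1,2). There exists a constant c₁ > 0 depending only on d and α such that for every measurable b : ℝ^d → ℝ^d and every t > 0, sup_{x∈ℝ^d} ∫_{ℝ^d} ( |x−y|^{−(d+1−α)} ∧ t² |x−y|^{−(d+1+α)} ) |b(y)| dy ≤ c₁ M_{|b|}^α(t^{1/α}), where a ∧ b := min{a,b}. -/
/-!
Put `r = t^{1/α}`, so that `t² = r^{2α}`. On `B(x, r)` the kernel is at most the Kato weight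
`|x - y|^{-(d+1-α)}`, which gives `M(r)` directly. On the dyadic annulus
`2^k r ≤ |x - y| < 2^{k+1} r` it is at most `2^{-k(d+1+α)} r^{-(d+1-α)}`. A ball of radius
`2^{k+1} r` is covered, on average, by `(2^{k+1} + 1)^d` balls of radius `r`, and on each of those
`∫ |b| ≤ r^{d+1-α} M(r)` because the Kato weight is at least `r^{-(d+1-α)}` there. The powers of
`r` cancel, the annulus contributes at most `4^d 2^{-k} M(r)`, and summing over `k` gives
`c₁ = 1 + 2·4^d`.
-/

open MeasureTheory Filter Topology
open scoped ENNReal RealInnerProductSpace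

/-- The Kato-class quantity `M_f^α(r) = sup_x ∫_{B(x,r)} |f(y)| |x-y|^{-(d+1-α)} dy`. -/
noncomputable def katoSup (d : ℕ) (α : ℝ) (f : EuclideanSpace ℝ (Fin d) → ℝ) (r : ℝ) : ℝ≥0∞ :=
  ⨆ x : EuclideanSpace ℝ (Fin d),
    ∫⁻ y in Metric.ball x r, ENNReal.ofReal (|f y| * ‖x - y‖ ^ (-((d : ℝ) + 1 - α)))

open Metric Module

section Covering

variable {E : Type*} [NormedAddCommGroup E] [NormedSpace ℝ E] [MeasurableSpace E] [BorelSpace E]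
  [FiniteDimensional ℝ E] (μ : Measure E) [μ.IsAddHaarMeasure]

theorem lintegral_ball_mul_measure_ball_le {g : E → ℝ≥0∞} (hg : Measurable g) (x : E) {r R : ℝ} :
    μ (ball 0 r) * ∫⁻ y in ball x R, g y ∂μ ≤
      μ (ball x (R + r)) * ⨆ z, ∫⁻ y in ball z r, g y ∂μ := by
  set S := ⨆ z, ∫⁻ y in ball z r, g y ∂μ
  set F : E → E → ℝ≥0∞ := fun y z => (ball x R).indicator g y * (ball y r).indicator 1 z
  have hF : Measurable (Function.uncurry F) :=
    ((hg.indicator measurableSet_ball).comp measurable_fst).mul <| measurable_one.indicator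
      (isOpen_lt (continuous_snd.dist continuous_fst) continuous_const).measurableSet
  have hinner : ∀ y, ∫⁻ z, F y z ∂μ = (ball x R).indicator g y * μ (ball 0 r) := fun y => by
    rw [lintegral_const_mul _ (measurable_one.indicator measurableSet_ball),
      lintegral_indicator_one measurableSet_ball, Measure.addHaar_ball_center]
  have houter : ∀ z, ∫⁻ y, F y z ∂μ ≤ (ball x (R + r)).indicator (fun _ => S) z := fun z => by
    by_cases hz : z ∈ ball x (R + r)
    · rw [Set.indicator_of_mem hz]
      calc ∫⁻ y, F y z ∂μ ≤ ∫⁻ y, (ball z r).indicator g y ∂μ := by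
            refine lintegral_mono fun y => ?_
            simp only [F, Set.indicator, mem_ball, dist_comm z y]
            split_ifs <;> simp
        _ = ∫⁻ y in ball z r, g y ∂μ := lintegral_indicator measurableSet_ball g
        _ ≤ S := le_iSup (fun z => ∫⁻ y in ball z r, g y ∂μ) z
    · rw [Set.indicator_of_notMem hz]
      have hF0 : ∀ y, F y z = 0 := fun y => by
        simp only [F, Set.indicator]
        split_ifs with h1 h2
        · exact absurd (mem_ball.2 ((dist_triangle z y x).trans_lt
            (by linarith [mem_ball.1 h1, mem_ball.1 h2]))) hz
        all_goals simp
      simp [hF0]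
  calc μ (ball 0 r) * ∫⁻ y in ball x R, g y ∂μ = ∫⁻ y, ∫⁻ z, F y z ∂μ ∂μ := by
        simp only [hinner]
        rw [lintegral_mul_const _ (hg.indicator measurableSet_ball),
          lintegral_indicator measurableSet_ball, mul_comm]
    _ = ∫⁻ z, ∫⁻ y, F y z ∂μ ∂μ := lintegral_lintegral_swap hF.aemeasurable
    _ ≤ ∫⁻ z, (ball x (R + r)).indicator (fun _ => S) z ∂μ := lintegral_mono houter
    _ = μ (ball x (R + r)) * S := by rw [lintegral_indicator_const measurableSet_ball, mul_comm]

theorem lintegral_ball_le_mul_iSup_lintegral_ball {g : E → ℝ≥0∞} (hg : Measurable g) (x : E)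
    {r R : ℝ} (hr : 0 < r) (hR : 0 ≤ R) :
    ∫⁻ y in ball x R, g y ∂μ ≤
      ENNReal.ofReal (((R + r) / r) ^ finrank ℝ E) * ⨆ z, ∫⁻ y in ball z r, g y ∂μ := by
  have hV₀ : μ (ball 0 1) ≠ 0 := (measure_ball_pos μ 0 one_pos).ne'
  have hV : μ (ball 0 1) ≠ ∞ := measure_ball_lt_top.ne
  have hrn : (0 : ℝ) < r ^ finrank ℝ E := by positivity
  have hpow : (R + r) ^ finrank ℝ E = r ^ finrank ℝ E * ((R + r) / r) ^ finrank ℝ E := by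
    rw [div_pow, mul_div_cancel₀ _ hrn.ne']
  set c := ENNReal.ofReal (r ^ finrank ℝ E) * μ (ball 0 1)
  refine (ENNReal.mul_le_mul_iff_right (a := c) (mul_ne_zero (by simpa using hrn) hV₀)
    (ENNReal.mul_ne_top ENNReal.ofReal_ne_top hV)).1 ?_
  calc c * ∫⁻ y in ball x R, g y ∂μ = μ (ball 0 r) * ∫⁻ y in ball x R, g y ∂μ := by
        rw [Measure.addHaar_ball_of_pos μ 0 hr]
    _ ≤ μ (ball x (R + r)) * ⨆ z, ∫⁻ y in ball z r, g y ∂μ :=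
        lintegral_ball_mul_measure_ball_le μ hg x
    _ = c * (ENNReal.ofReal (((R + r) / r) ^ finrank ℝ E) * ⨆ z, ∫⁻ y in ball z r, g y ∂μ) := by
        rw [Measure.addHaar_ball_of_pos μ x (by positivity), hpow, ENNReal.ofReal_mul hrn.le]
        ring

end Covering

theorem lintegral_le_setLIntegral_ball_add_tsum_annulus {X : Type*} [PseudoMetricSpace X]
    [MeasurableSpace X] (μ : Measure X) (g : X → ℝ≥0∞) (x : X) {r : ℝ} (hr : 0 < r) :
    ∫⁻ y, g y ∂μ ≤ ∫⁻ y in ball x r, g y ∂μ +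
      ∑' k : ℕ, ∫⁻ y in ball x (2 ^ (k + 1) * r) \ ball x (2 ^ k * r), g y ∂μ := by
  have hcover : Set.univ ⊆ ball x r ∪ ⋃ k : ℕ, ball x (2 ^ (k + 1) * r) \ ball x (2 ^ k * r) := by
    intro y _
    by_cases hy : dist y x < r
    · exact Or.inl hy
    obtain ⟨k, hk, hk'⟩ := exists_nat_pow_near ((one_le_div hr).2 (not_lt.1 hy)) one_lt_two
    refine Or.inr (Set.mem_iUnion.2 ⟨k, ?_, ?_⟩)
    · exact mem_ball.2 ((div_lt_iff₀ hr).1 hk')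
    · exact not_lt.2 ((le_div_iff₀ hr).1 hk)
  calc ∫⁻ y, g y ∂μ = ∫⁻ y in Set.univ, g y ∂μ := setLIntegral_univ g |>.symm
    _ ≤ _ := lintegral_mono_set hcover
    _ ≤ _ := lintegral_union_le _ _ _
    _ ≤ _ := by gcongr; exact lintegral_iUnion_le _ _

noncomputable def truncatedKernel (d : ℕ) (α t ρ : ℝ) : ℝ :=
  min (ρ ^ (-((d : ℝ) + 1 - α))) (t ^ 2 * ρ ^ (-((d : ℝ) + 1 + α)))

theorem truncatedKernel_nonneg {d : ℕ} {α t ρ : ℝ} (hρ : 0 ≤ ρ) : 0 ≤ truncatedKernel d α t ρ :=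
  le_min (by positivity) (by positivity)

theorem truncatedKernel_le_left (d : ℕ) (α t ρ : ℝ) :
    truncatedKernel d α t ρ ≤ ρ ^ (-((d : ℝ) + 1 - α)) :=
  min_le_left _ _

theorem truncatedKernel_le_of_two_pow_mul_le {d : ℕ} {α r ρ : ℝ} (hα : 0 ≤ α) (hr : 0 < r)
    {k : ℕ} (hρ : 2 ^ k * r ≤ ρ) :
    truncatedKernel d α (r ^ α) ρ ≤
      ((2 : ℝ) ^ k) ^ (-((d : ℝ) + 1 + α)) * r ^ (-((d : ℝ) + 1 - α)) := by
  have h2k : (0 : ℝ) < 2 ^ k := by positivity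
  calc truncatedKernel d α (r ^ α) ρ ≤ (r ^ α) ^ 2 * ρ ^ (-((d : ℝ) + 1 + α)) := min_le_right _ _
    _ ≤ (r ^ α) ^ 2 * (2 ^ k * r) ^ (-((d : ℝ) + 1 + α)) := by
        have : (0 : ℝ) ≤ d := d.cast_nonneg
        exact mul_le_mul_of_nonneg_left (Real.rpow_le_rpow_of_nonpos (by positivity) hρ
          (by linarith)) (by positivity)
    _ = ((2 : ℝ) ^ k) ^ (-((d : ℝ) + 1 + α)) * r ^ (-((d : ℝ) + 1 - α)) := by
        rw [Real.mul_rpow h2k.le hr.le, ← Real.rpow_natCast, ← Real.rpow_mul hr.le, mul_left_comm,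
          ← Real.rpow_add hr]
        ring_nf

theorem two_pow_rpow_mul_two_pow_add_one_pow_le {d : ℕ} {α : ℝ} (hα : 0 ≤ α) (k : ℕ) :
    ((2 : ℝ) ^ k) ^ (-((d : ℝ) + 1 + α)) * ((2 : ℝ) ^ (k + 1) + 1) ^ d ≤ 4 ^ d * 2⁻¹ ^ k := by
  have h2k : (0 : ℝ) < 2 ^ k := by positivity
  have hbase : (2 : ℝ) ^ (k + 1) + 1 ≤ 2 ^ k * 4 := by
    have : (1 : ℝ) ≤ 2 ^ k := one_le_pow₀ one_le_two
    rw [pow_succ]; linarith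
  calc ((2 : ℝ) ^ k) ^ (-((d : ℝ) + 1 + α)) * ((2 : ℝ) ^ (k + 1) + 1) ^ d
      ≤ ((2 : ℝ) ^ k) ^ (-((d : ℝ) + 1 + α)) * (((2 : ℝ) ^ k) ^ (d : ℝ) * 4 ^ d) := by
        rw [Real.rpow_natCast, ← mul_pow]
        gcongr
    _ = ((2 : ℝ) ^ k) ^ (-(1 + α)) * 4 ^ d := by
        rw [← mul_assoc, ← Real.rpow_add h2k]
        ring_nf
    _ ≤ ((2 : ℝ) ^ k) ^ (-1 : ℝ) * 4 ^ d := by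
        gcongr
        · exact one_le_pow₀ one_le_two
        · linarith
    _ = 4 ^ d * 2⁻¹ ^ k := by rw [Real.rpow_neg_one, inv_pow, mul_comm]

section Euclidean

variable {d : ℕ} {α : ℝ}

theorem setLIntegral_ball_le_katoSup (f : EuclideanSpace ℝ (Fin d) → ℝ)
    (x : EuclideanSpace ℝ (Fin d)) (r : ℝ) :
    ∫⁻ y in ball x r, ENNReal.ofReal (|f y| * ‖x - y‖ ^ (-((d : ℝ) + 1 - α))) ≤
      katoSup d α f r :=
  le_iSup (fun x => ∫⁻ y in ball x r, ENNReal.ofReal (|f y| * ‖x - y‖ ^ (-((d : ℝ) + 1 - α)))) x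

theorem setLIntegral_ball_le_rpow_mul_katoSup (hd : 1 ≤ d) (hαd : α < d + 1)
    (f : EuclideanSpace ℝ (Fin d) → ℝ) (z : EuclideanSpace ℝ (Fin d)) {r : ℝ} (hr : 0 < r) :
    ∫⁻ y in ball z r, ENNReal.ofReal |f y| ≤
      ENNReal.ofReal (r ^ ((d : ℝ) + 1 - α)) * katoSup d α f r := by
  have : NeZero d := ⟨by omega⟩
  have hweight : ∀ y ∈ ball z r, y ≠ z →
      |f y| ≤ r ^ ((d : ℝ) + 1 - α) * (|f y| * ‖z - y‖ ^ (-((d : ℝ) + 1 - α))) := by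
    intro y hy hyz
    have hzy : 0 < ‖z - y‖ := norm_sub_pos_iff.2 hyz.symm
    have hone : 1 ≤ r ^ ((d : ℝ) + 1 - α) * ‖z - y‖ ^ (-((d : ℝ) + 1 - α)) := by
      rw [Real.rpow_neg hzy.le, ← div_eq_mul_inv, ← Real.div_rpow hr.le hzy.le]
      refine Real.one_le_rpow ((one_le_div hzy).2 ?_) (by linarith)
      simpa [dist_eq_norm, norm_sub_rev] using (mem_ball.1 hy).le
    calc |f y| ≤ |f y| * (r ^ ((d : ℝ) + 1 - α) * ‖z - y‖ ^ (-((d : ℝ) + 1 - α))) :=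
          le_mul_of_one_le_right (abs_nonneg _) hone
      _ = _ := by ring
  calc ∫⁻ y in ball z r, ENNReal.ofReal |f y|
      ≤ ∫⁻ y in ball z r, ENNReal.ofReal (r ^ ((d : ℝ) + 1 - α)) *
          ENNReal.ofReal (|f y| * ‖z - y‖ ^ (-((d : ℝ) + 1 - α))) := by
        refine setLIntegral_mono_ae' measurableSet_ball ?_
        filter_upwards [volume.ae_ne z] with y hyz hy
        rw [← ENNReal.ofReal_mul (by positivity)]
        exact ENNReal.ofReal_le_ofReal (hweight y hy hyz)
    _ = ENNReal.ofReal (r ^ ((d : ℝ) + 1 - α)) *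
          ∫⁻ y in ball z r, ENNReal.ofReal (|f y| * ‖z - y‖ ^ (-((d : ℝ) + 1 - α))) :=
        lintegral_const_mul' _ _ ENNReal.ofReal_ne_top
    _ ≤ _ := by gcongr; exact setLIntegral_ball_le_katoSup f z r

theorem setLIntegral_annulus_truncatedKernel_le (hd : 1 ≤ d) (hα : 0 ≤ α) (hαd : α < d + 1)
    {f : EuclideanSpace ℝ (Fin d) → ℝ} (hf : Measurable f) (x : EuclideanSpace ℝ (Fin d))
    {r : ℝ} (hr : 0 < r) (k : ℕ) :
    ∫⁻ y in ball x (2 ^ (k + 1) * r) \ ball x (2 ^ k * r),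
        ENNReal.ofReal (truncatedKernel d α (r ^ α) ‖x - y‖) * ENNReal.ofReal |f y| ≤
      4 ^ d * 2⁻¹ ^ k * katoSup d α f r := by
  set β : ℝ := (d : ℝ) + 1 - α
  set c : ℝ := ((2 : ℝ) ^ k) ^ (-((d : ℝ) + 1 + α))
  set C : ℝ := ((2 : ℝ) ^ (k + 1) + 1) ^ d
  set K := katoSup d α f r
  have hball : ∫⁻ y in ball x (2 ^ (k + 1) * r), ENNReal.ofReal |f y| ≤
      ENNReal.ofReal C * (ENNReal.ofReal (r ^ β) * K) := by
    have hcover := lintegral_ball_le_mul_iSup_lintegral_ball volume hf.abs.ennreal_ofReal x hr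
      (R := 2 ^ (k + 1) * r) (by positivity)
    rw [finrank_euclideanSpace_fin, show ((2 : ℝ) ^ (k + 1) * r + r) / r = 2 ^ (k + 1) + 1 by
      field_simp] at hcover
    exact hcover.trans (by
      gcongr
      exact iSup_le fun z => setLIntegral_ball_le_rpow_mul_katoSup hd hαd f z hr)
  have hscale : c * C = c * r ^ (-β) * (C * r ^ β) := by
    have hcancel : r ^ (-β) * r ^ β = 1 := by rw [← Real.rpow_add hr]; simp
    linear_combination (-(c * C)) * hcancel
  calc _ ≤ ∫⁻ y in ball x (2 ^ (k + 1) * r) \ ball x (2 ^ k * r),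
          ENNReal.ofReal (c * r ^ (-β)) * ENNReal.ofReal |f y| := by
        refine setLIntegral_mono' (measurableSet_ball.diff measurableSet_ball) fun y hy => ?_
        gcongr
        refine truncatedKernel_le_of_two_pow_mul_le hα hr ?_
        simpa [dist_eq_norm, norm_sub_rev] using hy.2
    _ ≤ ENNReal.ofReal (c * r ^ (-β)) * ∫⁻ y in ball x (2 ^ (k + 1) * r), ENNReal.ofReal |f y| := by
        rw [lintegral_const_mul' _ _ ENNReal.ofReal_ne_top]
        gcongr
        exact Set.sdiff_subset
    _ ≤ ENNReal.ofReal (c * r ^ (-β)) * (ENNReal.ofReal C * (ENNReal.ofReal (r ^ β) * K)) := by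
        gcongr
    _ = ENNReal.ofReal (c * C) * K := by
        rw [hscale, ENNReal.ofReal_mul (by positivity : 0 ≤ c * r ^ (-β)),
          ENNReal.ofReal_mul (by positivity : (0 : ℝ) ≤ C)]
        ring
    _ ≤ 4 ^ d * 2⁻¹ ^ k * K := by
        gcongr
        refine (ENNReal.ofReal_le_ofReal (two_pow_rpow_mul_two_pow_add_one_pow_le hα k)).trans_eq ?_
        simp [ENNReal.ofReal_mul, ENNReal.ofReal_pow, ENNReal.ofReal_inv_of_pos, ENNReal.inv_pow]

theorem lintegral_truncatedKernel_mul_le (hd : 1 ≤ d) (hα : 0 ≤ α) (hαd : α < d + 1)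
    {f : EuclideanSpace ℝ (Fin d) → ℝ} (hf : Measurable f) (x : EuclideanSpace ℝ (Fin d))
    {r : ℝ} (hr : 0 < r) :
    ∫⁻ y, ENNReal.ofReal (truncatedKernel d α (r ^ α) ‖x - y‖) * ENNReal.ofReal |f y| ≤
      ENNReal.ofReal (1 + 2 * 4 ^ d) * katoSup d α f r := by
  set K := katoSup d α f r
  have hnear : ∫⁻ y in ball x r,
      ENNReal.ofReal (truncatedKernel d α (r ^ α) ‖x - y‖) * ENNReal.ofReal |f y| ≤ K := by
    refine le_trans (setLIntegral_mono' measurableSet_ball fun y _ => ?_)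
      (setLIntegral_ball_le_katoSup f x r)
    rw [← ENNReal.ofReal_mul (truncatedKernel_nonneg (norm_nonneg _)), mul_comm]
    exact ENNReal.ofReal_le_ofReal
      (mul_le_mul_of_nonneg_left (truncatedKernel_le_left d α _ _) (abs_nonneg _))
  have hsum : ∑' k : ℕ, 4 ^ d * 2⁻¹ ^ k * K = 2 * 4 ^ d * K := by
    rw [ENNReal.tsum_mul_right, ENNReal.tsum_mul_left, ENNReal.tsum_geometric,
      ENNReal.one_sub_inv_two, inv_inv, mul_comm _ 2]
  have hconst : ENNReal.ofReal (1 + 2 * 4 ^ d) = 1 + 2 * 4 ^ d := by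
    rw [ENNReal.ofReal_add zero_le_one (by positivity), ENNReal.ofReal_mul zero_le_two,
      ENNReal.ofReal_pow (by norm_num)]
    norm_num
  calc _ ≤ _ := lintegral_le_setLIntegral_ball_add_tsum_annulus volume _ x hr
    _ ≤ K + ∑' k : ℕ, 4 ^ d * 2⁻¹ ^ k * K := add_le_add hnear <| ENNReal.tsum_le_tsum fun k =>
        setLIntegral_annulus_truncatedKernel_le hd hα hαd hf x hr k
    _ = ENNReal.ofReal (1 + 2 * 4 ^ d) * K := by rw [hsum, hconst, add_mul, one_mul]

end Euclidean

/-- there is `c₁ = c₁(d,α)` such that for every measurable `b : ℝ^d → ℝ^d`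
and `t > 0`,
`sup_x ∫ (|x-y|^{-(d+1-α)} ∧ t²|x-y|^{-(d+1+α)}) |b(y)| dy ≤ c₁ M_{|b|}^α(t^{1/α})`. -/
theorem stmt8 (d : ℕ) (hd : 1 ≤ d) (α : ℝ) (hα1 : 1 < α) (hα2 : α < 2) :
    ∃ c₁ : ℝ, 0 < c₁ ∧
      ∀ b : EuclideanSpace ℝ (Fin d) → EuclideanSpace ℝ (Fin d), Measurable b →
        ∀ t : ℝ, 0 < t →
          (⨆ x : EuclideanSpace ℝ (Fin d), ∫⁻ y,
            ENNReal.ofReal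
              (min (‖x - y‖ ^ (-((d : ℝ) + 1 - α))) (t ^ 2 * ‖x - y‖ ^ (-((d : ℝ) + 1 + α))))
              * ENNReal.ofReal ‖b y‖)
          ≤ ENNReal.ofReal c₁ * katoSup d α (fun y => ‖b y‖) (t ^ α⁻¹) := by
  refine ⟨1 + 2 * 4 ^ d, by positivity, fun b hb t ht => iSup_le fun x => ?_⟩
  have hαd : α < d + 1 := by
    have : (1 : ℝ) ≤ d := by exact_mod_cast hd
    linarith
  have htα : (t ^ α⁻¹) ^ α = t := by
    rw [← Real.rpow_mul ht.le, inv_mul_cancel₀ (by linarith), Real.rpow_one]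
  simpa only [truncatedKernel, htα, abs_norm] using
    lintegral_truncatedKernel_mul_le hd (by linarith) hαd hb.norm x (Real.rpow_pos_of_pos ht α⁻¹)
end

section
/- Let d ≥ 1, α ∈ (1,2), T₀ > 0, C₁ ≥ 1, and set f(t,x,y) := t^{−d/α} ∧ t |x−y|^{−(d+α)}. Suppose q : (0,∞)×ℝ^d×ℝ^d → [0,∞) is measurable, satisfies the Chapman–Kolmogorov equation q(s+t,x,y) = ∫_{ℝ^d} q(s,x,z) q(t,z,y) dz for all s,t > 0 and x,y ∈ ℝ^d, and satisfies C₁^{−1} f(t,x,y) ≤ q(t,x,y) ≤ C₁ f(t,x,y) for all (t,x,y) ∈ (0,T₀]×ℝ^d×ℝ^d. Then there exist constants C₂ ≥ 1 and C₃ > 0, depending only on d, α, T₀ and C₁, such that C₂^{−1} e^{−C₃ t} f(t,x,y) ≤ q(t,x,y) ≤ C₂ e^{C₃ t} f(t,x,y) for every t > 0 and x,y ∈ ℝ^d. -/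
open MeasureTheory Filter Topology
open scoped ENNReal NNReal

/-- The comparison function `f(t,x,y) = t^{-d/α} ∧ t|x-y|^{-(d+α)}`, valued in `[0,∞]`
so that it equals `t^{-d/α}` when `x = y`. -/
noncomputable def heatBnd (d : ℕ) (α : ℝ) (t : ℝ) (x y : EuclideanSpace ℝ (Fin d)) : ℝ≥0∞ :=
  min (ENNReal.ofReal t ^ (-(d : ℝ) / α)) (ENNReal.ofReal t * (‖x - y‖₊ : ℝ≥0∞) ^ (-((d : ℝ) + α)))

/-!
Write `f t x y = t * max (t ^ (1/α)) ‖x - y‖ ^ (-(d + α))`. By scaling, `∫ f t x z dz` is a finite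
constant independent of `t` and `x`. Splitting the `z`-integral according to which of `‖x - z‖`,
`‖z - y‖` is at least `‖x - y‖ / 2`, and restricting it to the ball `B(x, t ^ (1/α))`, gives
`c f (2t) ≤ ∫ f t x z * f t z y dz ≤ C f (2t)`. Chapman–Kolmogorov at time `t + t` then turns
`a f t ≤ q t ≤ A f t` into `c a² f (2t) ≤ q (2t) ≤ C A² f (2t)`. The coefficients `e^{-κt} / c` and
`e^{κt} / C` are reproduced exactly by this squaring, so once they bound `q` on `(T₀/2, T₀]` they
do so for all `t > T₀/2`, by doubling.
-/

namespace HeatKernelBounds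

open Metric Set

lemma rpow_neg_antitone {p : ℝ} (hp : 0 ≤ p) : Antitone fun a : ℝ≥0∞ => a ^ (-p) := by
  intro a b h
  simp only [ENNReal.rpow_neg]
  exact ENNReal.inv_le_inv.2 (ENNReal.rpow_le_rpow h hp)

lemma rpow_neg_eq_two_rpow_mul {m : ℝ≥0∞} (hm : m ≠ ⊤) (p : ℝ) :
    m ^ (-p) = 2 ^ p * (2 * m) ^ (-p) := by
  rw [ENNReal.mul_rpow_of_ne_top ENNReal.ofNat_ne_top hm, ← mul_assoc,
    ← ENNReal.rpow_add _ _ two_ne_zero ENNReal.ofNat_ne_top, add_neg_cancel, ENNReal.rpow_zero,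
    one_mul]

lemma lintegral_comp_smul {E : Type*} [NormedAddCommGroup E] [NormedSpace ℝ E] [MeasurableSpace E]
    [BorelSpace E] [FiniteDimensional ℝ E] (μ : Measure E) [μ.IsAddHaarMeasure]
    (F : E → ℝ≥0∞) {R : ℝ} (hR : R ≠ 0) :
    ∫⁻ w, F (R • w) ∂μ = ENNReal.ofReal |(R ^ Module.finrank ℝ E)⁻¹| * ∫⁻ z, F z ∂μ := by
  rw [← smul_eq_mul, ← lintegral_smul_measure, ← Measure.map_addHaar_smul μ hR]
  exact (lintegral_map_equiv F (MeasurableEquiv.smul₀ R hR)).symm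

section HeatBnd

variable {d : ℕ} {α t : ℝ}

local notation "E" => EuclideanSpace ℝ (Fin d)

lemma ofReal_mul_rpow_inv_rpow (hα : 0 < α) (ht : 0 < t) :
    ENNReal.ofReal t * ENNReal.ofReal (t ^ α⁻¹) ^ (-((d : ℝ) + α)) =
      ENNReal.ofReal t ^ (-(d : ℝ) / α) := by
  rw [ENNReal.ofReal_rpow_of_pos (by positivity), ← ENNReal.ofReal_mul ht.le,
    ENNReal.ofReal_rpow_of_pos ht, ← Real.rpow_mul ht.le]
  congr 1
  nth_rw 1 [← Real.rpow_one t]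
  rw [← Real.rpow_add ht]
  congr 1
  field_simp
  ring

lemma ofReal_rpow_inv_pow_mul (ht : 0 < t) :
    ENNReal.ofReal ((t ^ α⁻¹) ^ d) * ENNReal.ofReal t ^ (-(d : ℝ) / α) = 1 := by
  rw [ENNReal.ofReal_rpow_of_pos ht, ← ENNReal.ofReal_mul (by positivity), ← Real.rpow_natCast,
    ← Real.rpow_mul ht.le, ← Real.rpow_add ht, neg_div, mul_comm, div_eq_mul_inv, add_neg_cancel,
    Real.rpow_zero, ENNReal.ofReal_one]

lemma heatBnd_eq_min (x y : E) : heatBnd d α t x y =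
    min (ENNReal.ofReal t ^ (-(d : ℝ) / α)) (ENNReal.ofReal t * ‖x - y‖ₑ ^ (-((d : ℝ) + α))) := by
  rw [heatBnd, enorm_eq_nnnorm]

lemma heatBnd_eq_mul_max (hα : 0 < α) (ht : 0 < t) (x y : E) : heatBnd d α t x y =
    ENNReal.ofReal t * max (ENNReal.ofReal (t ^ α⁻¹)) ‖x - y‖ₑ ^ (-((d : ℝ) + α)) := by
  rw [heatBnd_eq_min, (rpow_neg_antitone (by positivity)).map_max,
    mul_min_of_nonneg _ _ zero_le, ofReal_mul_rpow_inv_rpow hα ht]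

lemma heatBnd_comm (x y : E) : heatBnd d α t x y = heatBnd d α t y x := by
  rw [heatBnd_eq_min, heatBnd_eq_min, enorm_sub_rev]

lemma heatBnd_le_rpow (x y : E) : heatBnd d α t x y ≤ ENNReal.ofReal t ^ (-(d : ℝ) / α) :=
  min_le_left _ _

lemma heatBnd_ne_top (ht : 0 < t) (x y : E) : heatBnd d α t x y ≠ ⊤ :=
  ne_top_of_le_ne_top (by simp [ENNReal.rpow_eq_top_iff, ht]) (heatBnd_le_rpow x y)

lemma measurable_heatBnd (x : E) : Measurable (heatBnd d α t x) := by
  unfold heatBnd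
  fun_prop

lemma heatBnd_two_mul_le (hα : 0 < α) (x y : E) :
    heatBnd d α (2 * t) x y ≤ 2 * heatBnd d α t x y := by
  rw [heatBnd_eq_min, heatBnd_eq_min, ENNReal.ofReal_mul zero_le_two, ENNReal.ofReal_ofNat,
    mul_min_of_nonneg _ _ zero_le,
    ENNReal.mul_rpow_of_ne_top ENNReal.ofNat_ne_top ENNReal.ofReal_ne_top, mul_assoc]
  refine min_le_min (mul_le_mul_left ?_ _) le_rfl
  calc (2 : ℝ≥0∞) ^ (-(d : ℝ) / α) ≤ 2 ^ (1 : ℝ) :=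
        ENNReal.rpow_le_rpow_of_exponent_le one_le_two
          ((div_nonpos_of_nonpos_of_nonneg (by simp) hα.le).trans zero_le_one)
    _ = 2 := ENNReal.rpow_one 2

lemma heatBnd_le_two_rpow_mul_heatBnd_two_mul (hα : 0 < α) (x y : E) :
    heatBnd d α t x y ≤ 2 ^ ((d : ℝ) / α) * heatBnd d α (2 * t) x y := by
  have h1 : (1 : ℝ≥0∞) ≤ 2 ^ ((d : ℝ) / α) := by
    simpa using ENNReal.rpow_le_rpow_of_exponent_le one_le_two (by positivity : 0 ≤ (d : ℝ) / α)
  rw [heatBnd_eq_min, heatBnd_eq_min, ENNReal.ofReal_mul zero_le_two, ENNReal.ofReal_ofNat,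
    mul_min_of_nonneg _ _ zero_le,
    ENNReal.mul_rpow_of_ne_top ENNReal.ofNat_ne_top ENNReal.ofReal_ne_top, ← mul_assoc,
    ← ENNReal.rpow_add _ _ two_ne_zero ENNReal.ofNat_ne_top, neg_div, add_neg_cancel,
    ENNReal.rpow_zero, one_mul, mul_assoc 2]
  exact min_le_min le_rfl
    ((le_mul_of_one_le_left zero_le one_le_two).trans (le_mul_of_one_le_left zero_le h1))

lemma heatBnd_le_of_enorm_le (hα : 0 < α) {a b x y : E} (h : ‖x - y‖ₑ ≤ 2 * ‖a - b‖ₑ) :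
    heatBnd d α t a b ≤ 2 ^ ((d : ℝ) + α) * (ENNReal.ofReal t * ‖x - y‖ₑ ^ (-((d : ℝ) + α))) := by
  calc heatBnd d α t a b ≤ ENNReal.ofReal t * ‖a - b‖ₑ ^ (-((d : ℝ) + α)) := min_le_right _ _
    _ = ENNReal.ofReal t * (2 ^ ((d : ℝ) + α) * (2 * ‖a - b‖ₑ) ^ (-((d : ℝ) + α))) := by
      rw [← rpow_neg_eq_two_rpow_mul enorm_ne_top]
    _ ≤ _ := by
      rw [mul_left_comm]
      exact mul_le_mul_right (mul_le_mul_right (rpow_neg_antitone (by positivity) h) _) _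

lemma heatBnd_add_smul (hα : 0 < α) (ht : 0 < t) (x w : E) :
    heatBnd d α t x (x + t ^ α⁻¹ • w) = ENNReal.ofReal t ^ (-(d : ℝ) / α) * heatBnd d α 1 0 w := by
  have hR : 0 ≤ t ^ α⁻¹ := by positivity
  rw [heatBnd_eq_mul_max hα ht, heatBnd_eq_mul_max hα one_pos, sub_add_cancel_left, enorm_neg,
    enorm_smul, Real.enorm_eq_ofReal hR, Real.one_rpow, ENNReal.ofReal_one, one_mul, zero_sub,
    enorm_neg]
  nth_rw 1 [← mul_one (ENNReal.ofReal (t ^ α⁻¹))]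
  rw [← mul_max_of_nonneg _ _ zero_le, ENNReal.mul_rpow_of_ne_top ENNReal.ofReal_ne_top
    (max_ne_top ENNReal.one_ne_top enorm_ne_top), ← mul_assoc, ofReal_mul_rpow_inv_rpow hα ht]

lemma lintegral_heatBnd (hα : 0 < α) (ht : 0 < t) (x : E) :
    ∫⁻ z, heatBnd d α t x z = ∫⁻ w, heatBnd d α 1 0 w := by
  have hR : 0 < t ^ α⁻¹ := by positivity
  have h0 : ENNReal.ofReal t ^ (-(d : ℝ) / α) ≠ 0 := by simp [ENNReal.rpow_eq_zero_iff, ht]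
  have htop : ENNReal.ofReal t ^ (-(d : ℝ) / α) ≠ ⊤ := by simp [ENNReal.rpow_eq_top_iff, ht]
  have jacobian : ENNReal.ofReal |((t ^ α⁻¹) ^ d)⁻¹| = ENNReal.ofReal t ^ (-(d : ℝ) / α) := by
    rw [abs_of_pos (by positivity), ENNReal.ofReal_inv_of_pos (by positivity)]
    exact (ENNReal.eq_inv_of_mul_eq_one_left
      ((mul_comm _ _).trans (ofReal_rpow_inv_pow_mul ht))).symm
  have key := lintegral_comp_smul volume (fun z => heatBnd d α t x (x + z)) hR.ne'
  simp only [heatBnd_add_smul hα ht, lintegral_add_left_eq_self, finrank_euclideanSpace_fin,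
    jacobian, lintegral_const_mul' _ _ htop] at key
  exact ((ENNReal.mul_right_inj h0 htop).1 key).symm

lemma lintegral_heatBnd_left (hα : 0 < α) (ht : 0 < t) (y : E) :
    ∫⁻ z, heatBnd d α t z y = ∫⁻ w, heatBnd d α 1 0 w := by
  simp_rw [heatBnd_comm _ y]
  exact lintegral_heatBnd hα ht y

lemma lintegral_heatBnd_one_lt_top (hα : 0 < α) : ∫⁻ w : E, heatBnd d α 1 0 w < ⊤ := by
  have hp : (Module.finrank ℝ E : ℝ) < (d : ℝ) + α := by
    rw [finrank_euclideanSpace_fin]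
    linarith
  have hpt : ∀ w : E, heatBnd d α 1 0 w ≤
      2 ^ ((d : ℝ) + α) * ENNReal.ofReal ((1 + ‖w‖) ^ (-((d : ℝ) + α))) := by
    intro w
    rw [heatBnd_eq_mul_max hα one_pos, Real.one_rpow, ENNReal.ofReal_one, one_mul, zero_sub,
      enorm_neg, rpow_neg_eq_two_rpow_mul (max_ne_top ENNReal.one_ne_top enorm_ne_top),
      ← ENNReal.ofReal_rpow_of_pos (by positivity), ENNReal.ofReal_add zero_le_one (norm_nonneg _),
      ENNReal.ofReal_one, ofReal_norm]
    refine mul_le_mul_right (rpow_neg_antitone (by positivity) ?_) _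
    rw [two_mul]
    exact add_le_add (le_max_left _ _) (le_max_right _ _)
  calc ∫⁻ w, heatBnd d α 1 0 w
      ≤ ∫⁻ w, 2 ^ ((d : ℝ) + α) * ENNReal.ofReal ((1 + ‖w‖) ^ (-((d : ℝ) + α))) :=
        lintegral_mono hpt
    _ = 2 ^ ((d : ℝ) + α) * ∫⁻ w : E, ENNReal.ofReal ((1 + ‖w‖) ^ (-((d : ℝ) + α))) :=
        lintegral_const_mul' _ _ (by simp [ENNReal.rpow_eq_top_iff])
    _ < ⊤ := ENNReal.mul_lt_top
        (ENNReal.rpow_lt_top_of_nonneg (by positivity) ENNReal.ofNat_ne_top)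
        (finite_integral_one_add_norm hp)

lemma heatBnd_mul_heatBnd_le (hα : 0 < α) (x y z : E) :
    heatBnd d α t x z * heatBnd d α t z y ≤
      2 ^ ((d : ℝ) + α) * (ENNReal.ofReal t * ‖x - y‖ₑ ^ (-((d : ℝ) + α))) *
        (heatBnd d α t z y + heatBnd d α t x z) := by
  have tri : ‖x - y‖ₑ ≤ ‖x - z‖ₑ + ‖z - y‖ₑ := by simpa using enorm_add_le (x - z) (z - y)
  rcases le_total ‖x - z‖ₑ ‖z - y‖ₑ with h | h
  · have hzy : heatBnd d α t z y ≤ _ :=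
      heatBnd_le_of_enorm_le hα (tri.trans (by rw [two_mul]; gcongr))
    rw [mul_add]
    exact le_add_left ((mul_le_mul_right hzy _).trans_eq (mul_comm _ _))
  · have hxz : heatBnd d α t x z ≤ _ :=
      heatBnd_le_of_enorm_le hα (tri.trans (by rw [two_mul]; gcongr))
    rw [mul_add]
    exact le_add_right (mul_le_mul_left hxz _)

lemma lintegral_heatBnd_mul_heatBnd_le (hα : 0 < α) (ht : 0 < t) (x y : E) :
    ∫⁻ z, heatBnd d α t x z * heatBnd d α t z y ≤
      2 ^ ((d : ℝ) + α + 1) * (∫⁻ w, heatBnd d α 1 0 w) * heatBnd d α t x y := by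
  set p : ℝ := (d : ℝ) + α
  set M := ∫⁻ w : E, heatBnd d α 1 0 w
  have near : ∫⁻ z, heatBnd d α t x z * heatBnd d α t z y ≤
      2 ^ (p + 1) * M * ENNReal.ofReal t ^ (-(d : ℝ) / α) :=
    calc ∫⁻ z, heatBnd d α t x z * heatBnd d α t z y
        ≤ ∫⁻ z, ENNReal.ofReal t ^ (-(d : ℝ) / α) * heatBnd d α t z y :=
          lintegral_mono fun z => mul_le_mul_left (heatBnd_le_rpow x z) _
      _ = 1 * M * ENNReal.ofReal t ^ (-(d : ℝ) / α) := by
          rw [lintegral_const_mul' _ _ (by simp [ENNReal.rpow_eq_top_iff, ht]),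
            lintegral_heatBnd_left hα ht, one_mul, mul_comm]
      _ ≤ 2 ^ (p + 1) * M * ENNReal.ofReal t ^ (-(d : ℝ) / α) := by
          gcongr
          exact ENNReal.one_le_rpow one_le_two (by positivity)
  have far : ∫⁻ z, heatBnd d α t x z * heatBnd d α t z y ≤
      2 ^ (p + 1) * M * (ENNReal.ofReal t * ‖x - y‖ₑ ^ (-p)) := by
    have hmeas : Measurable fun z => heatBnd d α t z y := by
      simp_rw [heatBnd_comm _ y]
      exact measurable_heatBnd y
    have hsum : Measurable fun z => heatBnd d α t z y + heatBnd d α t x z :=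
      hmeas.add (measurable_heatBnd x)
    refine (lintegral_mono (heatBnd_mul_heatBnd_le hα x y)).trans (le_of_eq ?_)
    rw [lintegral_const_mul _ hsum, lintegral_add_left hmeas, lintegral_heatBnd_left hα ht,
      lintegral_heatBnd hα ht, ENNReal.rpow_add p 1 two_ne_zero ENNReal.ofNat_ne_top,
      ENNReal.rpow_one]
    ring
  rw [heatBnd_eq_min x y, mul_min_of_nonneg _ _ zero_le]
  exact le_min near far

lemma heatBnd_eq_of_enorm_le (hα : 0 < α) (ht : 0 < t) {x z : E}
    (h : ‖x - z‖ₑ ≤ ENNReal.ofReal (t ^ α⁻¹)) :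
    heatBnd d α t x z = ENNReal.ofReal t ^ (-(d : ℝ) / α) := by
  rw [heatBnd_eq_mul_max hα ht, max_eq_left h, ofReal_mul_rpow_inv_rpow hα ht]

lemma two_rpow_neg_mul_heatBnd_le (hα : 0 < α) (ht : 0 < t) {x y z : E}
    (h : ‖x - z‖ₑ ≤ ENNReal.ofReal (t ^ α⁻¹)) :
    2 ^ (-((d : ℝ) + α)) * heatBnd d α t x y ≤ heatBnd d α t z y := by
  set ρ := ENNReal.ofReal (t ^ α⁻¹)
  have hzy : max ρ ‖z - y‖ₑ ≤ 2 * max ρ ‖x - y‖ₑ := by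
    have tri : ‖z - y‖ₑ ≤ ‖x - z‖ₑ + ‖x - y‖ₑ := by
      simpa [enorm_sub_rev z x] using enorm_add_le (z - x) (x - y)
    rw [two_mul]
    exact max_le (le_add_right (le_max_left _ _))
      (tri.trans (add_le_add (h.trans (le_max_left _ _)) (le_max_right _ _)))
  rw [heatBnd_eq_mul_max hα ht, heatBnd_eq_mul_max hα ht, mul_left_comm,
    ← ENNReal.mul_rpow_of_ne_top ENNReal.ofNat_ne_top
      (max_ne_top ENNReal.ofReal_ne_top enorm_ne_top)]
  exact mul_le_mul_right (rpow_neg_antitone (by positivity) hzy) _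

lemma volume_ball_mul_le_lintegral_heatBnd_mul_heatBnd (hα : 0 < α) (ht : 0 < t) (x y : E) :
    volume (ball (0 : E) 1) * 2 ^ (-((d : ℝ) + α)) * heatBnd d α t x y ≤
      ∫⁻ z, heatBnd d α t x z * heatBnd d α t z y := by
  have hR : 0 < t ^ α⁻¹ := by positivity
  have on_ball : ∀ z ∈ ball x (t ^ α⁻¹), ENNReal.ofReal t ^ (-(d : ℝ) / α) *
      (2 ^ (-((d : ℝ) + α)) * heatBnd d α t x y) ≤ heatBnd d α t x z * heatBnd d α t z y := by
    intro z hz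
    have hxz : ‖x - z‖ₑ ≤ ENNReal.ofReal (t ^ α⁻¹) := by
      rw [mem_ball', dist_eq_norm] at hz
      rw [← ofReal_norm]
      exact ENNReal.ofReal_le_ofReal hz.le
    rw [heatBnd_eq_of_enorm_le hα ht hxz]
    exact mul_le_mul_right (two_rpow_neg_mul_heatBnd_le hα ht hxz) _
  calc volume (ball (0 : E) 1) * 2 ^ (-((d : ℝ) + α)) * heatBnd d α t x y
      = ∫⁻ _ in ball x (t ^ α⁻¹),
          ENNReal.ofReal t ^ (-(d : ℝ) / α) * (2 ^ (-((d : ℝ) + α)) * heatBnd d α t x y) := by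
        rw [setLIntegral_const, Measure.addHaar_ball_of_pos volume x hR,
          finrank_euclideanSpace_fin, ← mul_assoc, mul_comm _ (ENNReal.ofReal _), ← mul_assoc,
          ofReal_rpow_inv_pow_mul ht, one_mul]
        ring
    _ ≤ ∫⁻ z in ball x (t ^ α⁻¹), heatBnd d α t x z * heatBnd d α t z y :=
        setLIntegral_mono' measurableSet_ball on_ball
    _ ≤ ∫⁻ z, heatBnd d α t x z * heatBnd d α t z y := setLIntegral_le_lintegral _ _

lemma exists_lintegral_heatBnd_mul_heatBnd_le (hα : 0 < α) :
    ∃ C : ℝ, 1 ≤ C ∧ ∀ t, 0 < t → ∀ x y : E,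
      ∫⁻ z, heatBnd d α t x z * heatBnd d α t z y ≤ ENNReal.ofReal C * heatBnd d α (2 * t) x y := by
  set K : ℝ≥0∞ := 2 ^ ((d : ℝ) + α + 1) * (∫⁻ w : E, heatBnd d α 1 0 w) * 2 ^ ((d : ℝ) / α)
  have hK : K ≠ ⊤ := ENNReal.mul_ne_top (ENNReal.mul_ne_top
    (ENNReal.rpow_ne_top_of_nonneg (by positivity) ENNReal.ofNat_ne_top)
    (lintegral_heatBnd_one_lt_top hα).ne)
    (ENNReal.rpow_ne_top_of_nonneg (by positivity) ENNReal.ofNat_ne_top)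
  refine ⟨max K.toReal 1, le_max_right _ _, fun t ht x y => ?_⟩
  calc ∫⁻ z, heatBnd d α t x z * heatBnd d α t z y
      ≤ 2 ^ ((d : ℝ) + α + 1) * (∫⁻ w : E, heatBnd d α 1 0 w) * heatBnd d α t x y :=
        lintegral_heatBnd_mul_heatBnd_le hα ht x y
    _ ≤ 2 ^ ((d : ℝ) + α + 1) * (∫⁻ w : E, heatBnd d α 1 0 w) *
          (2 ^ ((d : ℝ) / α) * heatBnd d α (2 * t) x y) :=
        mul_le_mul_right (heatBnd_le_two_rpow_mul_heatBnd_two_mul hα x y) _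
    _ = K * heatBnd d α (2 * t) x y := (mul_assoc _ _ _).symm
    _ ≤ ENNReal.ofReal (max K.toReal 1) * heatBnd d α (2 * t) x y :=
        mul_le_mul_left ((ENNReal.le_ofReal_iff_toReal_le hK (by positivity)).2
          (le_max_left _ _)) _

lemma exists_le_lintegral_heatBnd_mul_heatBnd (hα : 0 < α) :
    ∃ c : ℝ, 0 < c ∧ c ≤ 1 ∧ ∀ t, 0 < t → ∀ x y : E,
      ENNReal.ofReal c * heatBnd d α (2 * t) x y ≤ ∫⁻ z, heatBnd d α t x z * heatBnd d α t z y := by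
  set k : ℝ≥0∞ := volume (ball (0 : E) 1) * 2 ^ (-((d : ℝ) + α))
  have hk0 : k ≠ 0 := mul_ne_zero (measure_ball_pos volume 0 one_pos).ne' (by simp)
  have hk : k ≠ ⊤ := ENNReal.mul_ne_top measure_ball_lt_top.ne
    (by simp [ENNReal.rpow_eq_top_iff])
  have hk' : 0 < k.toReal := ENNReal.toReal_pos hk0 hk
  refine ⟨min (k.toReal / 2) 1, by positivity, min_le_right _ _, fun t ht x y => ?_⟩
  calc ENNReal.ofReal (min (k.toReal / 2) 1) * heatBnd d α (2 * t) x y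
      ≤ ENNReal.ofReal (k.toReal / 2) * (2 * heatBnd d α t x y) :=
        mul_le_mul' (ENNReal.ofReal_le_ofReal (min_le_left _ _)) (heatBnd_two_mul_le hα x y)
    _ = k * heatBnd d α t x y := by
        rw [← mul_assoc, ← ENNReal.ofReal_ofNat 2, ← ENNReal.ofReal_mul (by positivity),
          div_mul_cancel₀ _ two_ne_zero, ENNReal.ofReal_toReal hk]
    _ ≤ ∫⁻ z, heatBnd d α t x z * heatBnd d α t z y :=
        volume_ball_mul_le_lintegral_heatBnd_mul_heatBnd hα ht x y

end HeatBnd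

lemma doubling_induction {P : ℝ → Prop} {T : ℝ} (hT : 0 < T) (base : ∀ t ∈ Ioc (T / 2) T, P t)
    (step : ∀ t, T / 2 < t → P t → P (2 * t)) (t : ℝ) (ht : T / 2 < t) : P t := by
  have upto : ∀ n : ℕ, ∀ t ∈ Ioc (T / 2) (2 ^ n * T), P t := by
    intro n
    induction n with
    | zero => simpa using base
    | succ n ih =>
      rintro t ⟨hlo, hhi⟩
      rcases le_or_gt t (2 ^ n * T) with h | h
      · exact ih t ⟨hlo, h⟩
      · have hT' : T ≤ 2 ^ n * T := le_mul_of_one_le_left hT.le (one_le_pow₀ one_le_two)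
        rw [pow_succ] at hhi
        have := step (t / 2) (by linarith) (ih (t / 2) ⟨by linarith, by linarith⟩)
        rwa [mul_div_cancel₀ t two_ne_zero] at this
  obtain ⟨n, hn⟩ := pow_unbounded_of_one_lt (t / T) one_lt_two
  exact upto n t ⟨ht, ((div_lt_iff₀ hT).1 hn).le⟩

lemma bounds_mono {F Q : ℝ≥0∞} {a a' b b' : ℝ} (ha : a' ≤ a) (hb : b ≤ b')
    (h : ENNReal.ofReal a * F ≤ Q ∧ Q ≤ ENNReal.ofReal b * F) :
    ENNReal.ofReal a' * F ≤ Q ∧ Q ≤ ENNReal.ofReal b' * F :=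
  ⟨(mul_le_mul_left (ENNReal.ofReal_le_ofReal ha) F).trans h.1,
    h.2.trans (mul_le_mul_left (ENNReal.ofReal_le_ofReal hb) F)⟩

section Doubling

variable {X : Type*} [MeasurableSpace X] {μ : Measure X} {f : ℝ → X → X → ℝ≥0∞}
  {q : ℝ → X → X → ℝ}

lemma bounds_two_mul {t : ℝ} {c C a A : ℝ≥0∞} (hC : C ≠ ⊤) (hA : A ≠ ⊤)
    (hf_lower : ∀ x y, c * f (2 * t) x y ≤ ∫⁻ z, f t x z * f t z y ∂μ)
    (hf_upper : ∀ x y, ∫⁻ z, f t x z * f t z y ∂μ ≤ C * f (2 * t) x y)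
    (hf_top : ∀ x y, f (2 * t) x y ≠ ⊤)
    (hq0 : ∀ x y, 0 ≤ q t x y) (hqm : Measurable fun p : X × X => q t p.1 p.2)
    (hck : ∀ x y, q (2 * t) x y = ∫ z, q t x z * q t z y ∂μ)
    (hbd : ∀ x y, a * f t x y ≤ ENNReal.ofReal (q t x y) ∧
      ENNReal.ofReal (q t x y) ≤ A * f t x y) (x y : X) :
    c * a ^ 2 * f (2 * t) x y ≤ ENNReal.ofReal (q (2 * t) x y) ∧
      ENNReal.ofReal (q (2 * t) x y) ≤ C * A ^ 2 * f (2 * t) x y := by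
  set I := ∫⁻ z, ENNReal.ofReal (q t x z) * ENNReal.ofReal (q t z y) ∂μ
  have upper : I ≤ C * A ^ 2 * f (2 * t) x y :=
    calc I ≤ ∫⁻ z, A ^ 2 * (f t x z * f t z y) ∂μ := lintegral_mono fun z => by
          rw [sq, mul_mul_mul_comm]; exact mul_le_mul' (hbd x z).2 (hbd z y).2
      _ = A ^ 2 * ∫⁻ z, f t x z * f t z y ∂μ := lintegral_const_mul' _ _ (by simpa using hA)
      _ ≤ A ^ 2 * (C * f (2 * t) x y) := mul_le_mul_right (hf_upper x y) _
      _ = C * A ^ 2 * f (2 * t) x y := by ring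
  have lower : c * a ^ 2 * f (2 * t) x y ≤ I :=
    calc c * a ^ 2 * f (2 * t) x y = a ^ 2 * (c * f (2 * t) x y) := by ring
      _ ≤ a ^ 2 * ∫⁻ z, f t x z * f t z y ∂μ := mul_le_mul_right (hf_lower x y) _
      _ ≤ ∫⁻ z, a ^ 2 * (f t x z * f t z y) ∂μ := lintegral_const_mul_le _ _
      _ ≤ I := lintegral_mono fun z => by
          rw [sq, mul_mul_mul_comm]; exact mul_le_mul' (hbd x z).1 (hbd z y).1
  have hI : ENNReal.ofReal (q (2 * t) x y) = I := by
    have hmeas : AEStronglyMeasurable (fun z => q t x z * q t z y) μ :=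
      ((hqm.comp measurable_prodMk_left).mul
        (hqm.comp measurable_prodMk_right)).aestronglyMeasurable
    rw [hck, integral_eq_lintegral_of_nonneg_ae
      (ae_of_all _ fun z => mul_nonneg (hq0 x z) (hq0 z y)) hmeas, ENNReal.ofReal_toReal]
    · simp_rw [ENNReal.ofReal_mul (hq0 _ _), I]
    · simp_rw [ENNReal.ofReal_mul (hq0 _ _)]
      exact ne_top_of_le_ne_top (ENNReal.mul_ne_top (ENNReal.mul_ne_top hC (by simpa using hA))
        (hf_top x y)) upper
  rw [hI]
  exact ⟨lower, upper⟩

lemma ofReal_mul_ofReal_exp_div_sq {c : ℝ} (hc : 0 < c) (k t : ℝ) :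
    ENNReal.ofReal c * ENNReal.ofReal (Real.exp (k * t) / c) ^ 2 =
      ENNReal.ofReal (Real.exp (k * (2 * t)) / c) := by
  rw [← ENNReal.ofReal_pow (by positivity), ← ENNReal.ofReal_mul hc.le, mul_left_comm, two_mul,
    Real.exp_add]
  congr 1
  field_simp

lemma exp_div_bounds_of_doubling {T₀ c C κ : ℝ} (hT₀ : 0 < T₀) (hc : 0 < c) (hC : 0 < C)
    (hf_lower : ∀ t, 0 < t → ∀ x y,
      ENNReal.ofReal c * f (2 * t) x y ≤ ∫⁻ z, f t x z * f t z y ∂μ)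
    (hf_upper : ∀ t, 0 < t → ∀ x y,
      ∫⁻ z, f t x z * f t z y ∂μ ≤ ENNReal.ofReal C * f (2 * t) x y)
    (hf_top : ∀ t, 0 < t → ∀ x y, f t x y ≠ ⊤)
    (hq0 : ∀ t x y, 0 ≤ q t x y) (hqm : ∀ t, Measurable fun p : X × X => q t p.1 p.2)
    (hck : ∀ t, 0 < t → ∀ x y, q (2 * t) x y = ∫ z, q t x z * q t z y ∂μ)
    (hbase : ∀ t ∈ Ioc (T₀ / 2) T₀, ∀ x y,
      ENNReal.ofReal (Real.exp (-κ * t) / c) * f t x y ≤ ENNReal.ofReal (q t x y) ∧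
      ENNReal.ofReal (q t x y) ≤ ENNReal.ofReal (Real.exp (κ * t) / C) * f t x y)
    (t : ℝ) (ht : T₀ / 2 < t) (x y : X) :
    ENNReal.ofReal (Real.exp (-κ * t) / c) * f t x y ≤ ENNReal.ofReal (q t x y) ∧
      ENNReal.ofReal (q t x y) ≤ ENNReal.ofReal (Real.exp (κ * t) / C) * f t x y := by
  refine doubling_induction hT₀ hbase (fun t ht hbd x y => ?_) t ht x y
  have ht0 : 0 < t := by linarith
  have h := bounds_two_mul ENNReal.ofReal_ne_top ENNReal.ofReal_ne_top (hf_lower t ht0)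
    (hf_upper t ht0) (hf_top (2 * t) (by positivity)) (hq0 t) (hqm t) (hck t ht0) hbd x y
  rwa [ofReal_mul_ofReal_exp_div_sq hc, ofReal_mul_ofReal_exp_div_sq hC] at h

theorem exists_exp_bounds_of_doubling {T₀ C₁ c C : ℝ} (hT₀ : 0 < T₀) (hC₁ : 1 ≤ C₁)
    (hc : 0 < c) (hc1 : c ≤ 1) (hC : 1 ≤ C)
    (hf_lower : ∀ t, 0 < t → ∀ x y,
      ENNReal.ofReal c * f (2 * t) x y ≤ ∫⁻ z, f t x z * f t z y ∂μ)
    (hf_upper : ∀ t, 0 < t → ∀ x y,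
      ∫⁻ z, f t x z * f t z y ∂μ ≤ ENNReal.ofReal C * f (2 * t) x y)
    (hf_top : ∀ t, 0 < t → ∀ x y, f t x y ≠ ⊤)
    (hq0 : ∀ t x y, 0 ≤ q t x y) (hqm : ∀ t, Measurable fun p : X × X => q t p.1 p.2)
    (hck : ∀ t, 0 < t → ∀ x y, q (2 * t) x y = ∫ z, q t x z * q t z y ∂μ)
    (hbd : ∀ t ∈ Ioc 0 T₀, ∀ x y,
      ENNReal.ofReal C₁⁻¹ * f t x y ≤ ENNReal.ofReal (q t x y) ∧
      ENNReal.ofReal (q t x y) ≤ ENNReal.ofReal C₁ * f t x y) :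
    ∃ κ : ℝ, 0 < κ ∧ ∀ t : ℝ, 0 < t → ∀ x y,
      ENNReal.ofReal (C₁⁻¹ * Real.exp (-κ * t)) * f t x y ≤ ENNReal.ofReal (q t x y) ∧
      ENNReal.ofReal (q t x y) ≤ ENNReal.ofReal (C₁ * Real.exp (κ * t)) * f t x y := by
  -- `κ * (T₀ / 2) = C₁ * C / c`: large enough for `hbd` to give the exponential bounds on
  -- `(T₀ / 2, T₀]`, from where doubling takes over.
  set κ := 2 / T₀ * (C₁ * C / c)
  have hκ : 0 < κ := by positivity
  have hexp : ∀ t, T₀ / 2 < t → C₁ * C ≤ c * Real.exp (κ * t) := fun t ht => by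
    refine (div_le_iff₀' hc).1 ?_
    calc C₁ * C / c = κ * (T₀ / 2) := by simp only [κ]; field_simp
      _ ≤ κ * t := by gcongr
      _ ≤ Real.exp (κ * t) := by linarith [Real.add_one_le_exp (κ * t)]
  have large := exp_div_bounds_of_doubling (κ := κ) hT₀ hc (by positivity) hf_lower hf_upper
    hf_top hq0 hqm hck fun t ht x y => by
      have := hexp t ht.1
      refine bounds_mono ?_ ?_ (hbd t ⟨by linarith [ht.1], ht.2⟩ x y)
      · calc Real.exp (-κ * t) / c = (c * Real.exp (κ * t))⁻¹ := by
              rw [neg_mul, Real.exp_neg]; field_simp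
          _ ≤ C₁⁻¹ := inv_anti₀ (by positivity) (by nlinarith)
      · rw [le_div_iff₀ (by positivity)]
        nlinarith [Real.exp_pos (κ * t)]
  refine ⟨κ, hκ, fun t ht x y => ?_⟩
  rcases le_or_gt t (T₀ / 2) with hsmall | hlarge
  · refine bounds_mono ?_ ?_ (hbd t ⟨ht, by linarith⟩ x y)
    · exact mul_le_of_le_one_right (by positivity) (Real.exp_le_one_iff.2 (by nlinarith))
    · exact le_mul_of_one_le_right (by positivity) (Real.one_le_exp (by positivity))
  · refine bounds_mono ?_ ?_ (large t hlarge x y)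
    · rw [div_eq_mul_inv, mul_comm]
      gcongr
      linarith
    · rw [div_eq_mul_inv, mul_comm]
      gcongr
      exact (inv_le_one_of_one_le₀ hC).trans hC₁

end Doubling

end HeatKernelBounds

open HeatKernelBounds in
theorem stmt12_general (d : ℕ) (α : ℝ) (hα1 : 1 < α)
    (T₀ C₁ : ℝ) (hT₀ : 0 < T₀) (hC₁ : 1 ≤ C₁)
    (q : ℝ → EuclideanSpace ℝ (Fin d) → EuclideanSpace ℝ (Fin d) → ℝ)
    (hq0 : ∀ t x y, 0 ≤ q t x y)
    (hqm : Measurable fun p : ℝ × EuclideanSpace ℝ (Fin d) × EuclideanSpace ℝ (Fin d) =>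
      q p.1 p.2.1 p.2.2)
    (hck : ∀ s t : ℝ, 0 < s → 0 < t → ∀ x y,
      q (s + t) x y = ∫ z, q s x z * q t z y)
    (hbd : ∀ t ∈ Set.Ioc (0 : ℝ) T₀, ∀ x y,
      ENNReal.ofReal C₁⁻¹ * heatBnd d α t x y ≤ ENNReal.ofReal (q t x y) ∧
      ENNReal.ofReal (q t x y) ≤ ENNReal.ofReal C₁ * heatBnd d α t x y) :
    ∃ C₂ : ℝ, 1 ≤ C₂ ∧ ∃ C₃ : ℝ, 0 < C₃ ∧ ∀ t : ℝ, 0 < t → ∀ x y,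
      ENNReal.ofReal (C₂⁻¹ * Real.exp (-C₃ * t)) * heatBnd d α t x y ≤
        ENNReal.ofReal (q t x y) ∧
      ENNReal.ofReal (q t x y) ≤ ENNReal.ofReal (C₂ * Real.exp (C₃ * t)) * heatBnd d α t x y := by
  have hα : 0 < α := by linarith
  obtain ⟨c, hc, hc1, hlower⟩ := exists_le_lintegral_heatBnd_mul_heatBnd (d := d) hα
  obtain ⟨C, hC, hupper⟩ := exists_lintegral_heatBnd_mul_heatBnd_le (d := d) hα
  obtain ⟨κ, hκ, hbounds⟩ := exists_exp_bounds_of_doubling (μ := volume) hT₀ hC₁ hc hc1 hC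
    hlower hupper (fun _ ht => heatBnd_ne_top ht) hq0
    (fun _ => hqm.comp (measurable_const.prodMk measurable_id))
    (fun t ht x y => by rw [two_mul]; exact hck t t ht ht x y) hbd
  exact ⟨C₁, hC₁, κ, hκ, hbounds⟩

/-- a nonnegative measurable kernel satisfying Chapman–Kolmogorov and
two-sided stable heat kernel bounds on `(0,T₀]` satisfies, up to exponential factors,
the same bounds for all `t > 0`. -/
theorem stmt12 (d : ℕ) (hd : 1 ≤ d) (α : ℝ) (hα1 : 1 < α) (hα2 : α < 2)
    (T₀ C₁ : ℝ) (hT₀ : 0 < T₀) (hC₁ : 1 ≤ C₁)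
    (q : ℝ → EuclideanSpace ℝ (Fin d) → EuclideanSpace ℝ (Fin d) → ℝ)
    (hq0 : ∀ t x y, 0 ≤ q t x y)
    (hqm : Measurable fun p : ℝ × EuclideanSpace ℝ (Fin d) × EuclideanSpace ℝ (Fin d) =>
      q p.1 p.2.1 p.2.2)
    (hck : ∀ s t : ℝ, 0 < s → 0 < t → ∀ x y,
      q (s + t) x y = ∫ z, q s x z * q t z y)
    (hbd : ∀ t ∈ Set.Ioc (0 : ℝ) T₀, ∀ x y,
      ENNReal.ofReal C₁⁻¹ * heatBnd d α t x y ≤ ENNReal.ofReal (q t x y) ∧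
      ENNReal.ofReal (q t x y) ≤ ENNReal.ofReal C₁ * heatBnd d α t x y) :
    ∃ C₂ : ℝ, 1 ≤ C₂ ∧ ∃ C₃ : ℝ, 0 < C₃ ∧ ∀ t : ℝ, 0 < t → ∀ x y,
      ENNReal.ofReal (C₂⁻¹ * Real.exp (-C₃ * t)) * heatBnd d α t x y ≤
        ENNReal.ofReal (q t x y) ∧
      ENNReal.ofReal (q t x y) ≤ ENNReal.ofReal (C₂ * Real.exp (C₃ * t)) * heatBnd d α t x y :=
  stmt12_general d α hα1 T₀ C₁ hT₀ hC₁ q hq0 hqm hck hbd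
end
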